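/- Assume k is a field and fix i ≠ j in {1,…,n−1}. The invariant elements of R that are Λ-homogeneous of degree H − Σ_{I∈𝓘, I∩{i,j}=∅} E_I are exactly the scalar multiples of the binomial B_{ij} := y_i·∏_{I∈𝓘, j∈I, i∉I} x_I − y_j·∏_{I∈𝓘, i∈I, j∉I} x_I. (Proposition 3.5: the boundary divisor class has a one-dimensional space of invariant sections, spanned by B_{ij}.) -/

import Mathlib

open MvPolynomial

noncomputable section

/-- The index set 𝓘: subsets `I ⊆ {1,…,n−1}` with `1 ≤ |I| ≤ n−4`. -/
abbrev Idx (n : ℕ) : Type := {I : Finset (Fin (n - 1)) // 1 ≤ I.card ∧ I.card ≤ n - 4}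

/-- The variables of the Cox ring of `X_n`: the `y_i` and the `x_I`. -/
abbrev Vars (n : ℕ) : Type := Fin (n - 1) ⊕ Idx n

variable (k : Type) [Field k]

/-- `R = k[y_1,…,y_{n−1},(x_I)_{I∈𝓘}]`, the Cox ring of the toric variety `X_n`. -/
abbrev R (n : ℕ) : Type := MvPolynomial (Vars n) k

/-- The variable `y_i`. -/
def yy (n : ℕ) (i : Fin (n - 1)) : R k n := X (Sum.inl i)

/-- The variable `x_I`. -/
def xx (n : ℕ) (I : Idx n) : R k n := X (Sum.inr I)

/-- `z_i = ∏_{I∈𝓘, i∈I} x_I`. -/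
def zz (n : ℕ) (i : Fin (n - 1)) : R k n :=
  ∏ I ∈ Finset.univ.filter (fun I : Idx n => i ∈ I.1), xx k n I

/-- The `k`-algebra homomorphism `τ : R → R[T]` with `τ(x_I) = x_I` and
`τ(y_i) = y_i + T·z_i`.  An element `f ∈ R` is invariant iff `τ f = Polynomial.C f`. -/
def τₐ (n : ℕ) : R k n →ₐ[k] Polynomial (R k n) :=
  aeval (Sum.elim
    (fun i => Polynomial.C (yy k n i) + Polynomial.X * Polynomial.C (zz k n i))
    (fun I => Polynomial.C (xx k n I)))

/-- `Λ = ℤ·H ⊕ ⨁_{I∈𝓘} ℤ·E_I`, the free abelian group on `H` and the `E_I`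
(identified with `Pic(X_n) = Pic(M̄_{0,n})`). -/
abbrev Pic (n : ℕ) : Type := (Unit ⊕ Idx n) →₀ ℤ

/-- The hyperplane class `H`. -/
def Hc (n : ℕ) : Pic n := Finsupp.single (Sum.inl ()) 1

/-- The exceptional class `E_I`. -/
def Ec (n : ℕ) (I : Idx n) : Pic n := Finsupp.single (Sum.inr I) 1

/-- The `Λ`-grading of `R`: `deg y_j = H − Σ_{I∈𝓘, j∉I} E_I` and `deg x_I = E_I`. -/
def wt (n : ℕ) : Vars n → Pic n :=
  Sum.elim
    (fun j => Hc n - ∑ I ∈ Finset.univ.filter (fun I : Idx n => j ∉ I.1), Ec n I)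
    (fun I => Ec n I)

/-- The binomial `B_{ij} = y_i·∏_{I∈𝓘, j∈I, i∉I} x_I − y_j·∏_{I∈𝓘, i∈I, j∉I} x_I`. -/
def B (n : ℕ) (i j : Fin (n - 1)) : R k n :=
  yy k n i * ∏ I ∈ Finset.univ.filter (fun I : Idx n => j ∈ I.1 ∧ i ∉ I.1), xx k n I -
  yy k n j * ∏ I ∈ Finset.univ.filter (fun I : Idx n => i ∈ I.1 ∧ j ∉ I.1), xx k n I

/-! ### Auxiliary lemmas -/

lemma prod_X_monomial {α : Type} (n : ℕ) (s : Finset α) (g : α → Vars n) :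
    (∏ a ∈ s, (X (g a) : R k n)) = monomial (∑ a ∈ s, Finsupp.single (g a) 1) 1 := by
  classical
  induction s using Finset.induction_on with
  | empty => simp
  | insert _ _ h ih =>
      rw [Finset.prod_insert h, Finset.sum_insert h, ih, X, monomial_mul, one_mul]

/-- exponent vector of the monomial `y_i ∏_{j∈I, i∉I} x_I` -/
def dd (n : ℕ) (i j : Fin (n - 1)) : Vars n →₀ ℕ :=
  Finsupp.single (Sum.inl i) 1 +
    ∑ I ∈ Finset.univ.filter (fun I : Idx n => j ∈ I.1 ∧ i ∉ I.1),
      Finsupp.single (Sum.inr I) 1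

lemma Mi_eq (n : ℕ) (i j : Fin (n - 1)) :
    yy k n i * ∏ I ∈ Finset.univ.filter (fun I : Idx n => j ∈ I.1 ∧ i ∉ I.1), xx k n I
      = monomial (dd n i j) (1 : k) := by
  rw [show (fun I : Idx n => xx k n I) = fun I => (X (Sum.inr I) : R k n) from rfl]
  rw [prod_X_monomial, yy, X, monomial_mul, one_mul, dd]

lemma dd_apply_inl (n : ℕ) (i j m : Fin (n - 1)) :
    dd n i j (Sum.inl m) = if m = i then 1 else 0 := by
  classical
  rw [dd, Finsupp.add_apply, Finsupp.finset_sum_apply]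
  simp [Finsupp.single_apply, eq_comm]

lemma dd_apply_inr (n : ℕ) (i j : Fin (n - 1)) (I : Idx n) :
    dd n i j (Sum.inr I) = if j ∈ I.1 ∧ i ∉ I.1 then 1 else 0 := by
  classical
  rw [dd, Finsupp.add_apply, Finsupp.finset_sum_apply]
  simp [Finsupp.single_apply]

lemma sumEc_apply_inl (n : ℕ) (s : Finset (Idx n)) :
    (∑ I ∈ s, Ec n I) (Sum.inl ()) = 0 := by
  rw [Finsupp.finset_sum_apply]; simp [Ec, Finsupp.single_apply]

lemma sumEc_apply_inr (n : ℕ) (s : Finset (Idx n)) (I : Idx n) :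
    (∑ I' ∈ s, Ec n I') (Sum.inr I) = if I ∈ s then 1 else 0 := by
  classical
  rw [Finsupp.finset_sum_apply]
  simp only [Ec, Finsupp.single_apply, Sum.inr.injEq]
  rw [Finset.sum_ite_eq' s I (fun _ => (1 : ℤ))]

lemma wt_inl_inl (n : ℕ) (m : Fin (n - 1)) : wt n (Sum.inl m) (Sum.inl ()) = 1 := by
  simp [wt, Finsupp.sub_apply, Hc, sumEc_apply_inl, Finsupp.single_apply]

lemma wt_inl_inr (n : ℕ) (m : Fin (n - 1)) (I : Idx n) :
    wt n (Sum.inl m) (Sum.inr I) = if m ∈ I.1 then 0 else -1 := by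
  simp only [wt, Sum.elim_inl, Finsupp.sub_apply, Hc, Finsupp.single_apply,
    sumEc_apply_inr, Finset.mem_filter, Finset.mem_univ, true_and]
  split_ifs <;> simp_all

lemma wt_inr_inl (n : ℕ) (I' : Idx n) : wt n (Sum.inr I') (Sum.inl ()) = 0 := by
  simp [wt, Ec, Finsupp.single_apply]

lemma wt_inr_inr (n : ℕ) (I' I : Idx n) :
    wt n (Sum.inr I') (Sum.inr I) = if I' = I then 1 else 0 := by
  simp [wt, Ec, Finsupp.single_apply]

lemma weight_coord (n : ℕ) (d : Vars n →₀ ℕ) (u : Unit ⊕ Idx n) :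
    (Finsupp.weight (wt n) d) u = ∑ v : Vars n, (d v : ℤ) * (wt n v u) := by
  classical
  rw [Finsupp.weight_apply, Finsupp.sum_fintype _ _ (fun v => by simp)]
  rw [Finsupp.finset_sum_apply]
  refine Finset.sum_congr rfl fun v _ => ?_
  rw [Finsupp.smul_apply]
  push_cast [nsmul_eq_mul]
  ring

lemma weight_single_one (n : ℕ) (v : Vars n) :
    Finsupp.weight (wt n) (Finsupp.single v 1) = wt n v := by
  rw [Finsupp.weight_apply, Finsupp.sum_single_index] <;> simp

lemma weight_dd (n : ℕ) (i j : Fin (n - 1)) :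
    Finsupp.weight (wt n) (dd n i j)
      = Hc n - ∑ I ∈ Finset.univ.filter (fun I : Idx n => i ∉ I.1 ∧ j ∉ I.1), Ec n I := by
  classical
  rw [dd, map_add, map_sum, weight_single_one]
  simp only [weight_single_one]
  have hsplit : (Finset.univ.filter (fun I : Idx n => i ∉ I.1))
      = (Finset.univ.filter (fun I : Idx n => j ∈ I.1 ∧ i ∉ I.1))
        ∪ (Finset.univ.filter (fun I : Idx n => i ∉ I.1 ∧ j ∉ I.1)) := by
    ext I; simp only [Finset.mem_filter, Finset.mem_union, Finset.mem_univ, true_and]; tauto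
  have hdisj : Disjoint (Finset.univ.filter (fun I : Idx n => j ∈ I.1 ∧ i ∉ I.1))
      (Finset.univ.filter (fun I : Idx n => i ∉ I.1 ∧ j ∉ I.1)) := by
    rw [Finset.disjoint_left]
    intro I hI hI'
    simp only [Finset.mem_filter] at hI hI'
    tauto
  have h1 : wt n (Sum.inl i)
      = Hc n - ∑ I ∈ Finset.univ.filter (fun I : Idx n => i ∉ I.1), Ec n I := rfl
  rw [h1, hsplit, Finset.sum_union hdisj]
  have h2 : ∀ I : Idx n, wt n (Sum.inr I) = Ec n I := fun _ => rfl
  simp only [h2]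
  abel

lemma sum_nat_eq_one {α : Type} [Fintype α] [DecidableEq α] (g : α → ℕ)
    (h : ∑ a, g a = 1) : ∃ m, g m = 1 ∧ ∀ m', m' ≠ m → g m' = 0 := by
  have h1 : ∃ m, g m ≠ 0 := by
    by_contra hc
    push_neg at hc
    simp [hc] at h
  obtain ⟨m, hm⟩ := h1
  rw [← Finset.add_sum_erase _ g (Finset.mem_univ m)] at h
  have h2 : g m = 1 ∧ ∑ a ∈ Finset.univ.erase m, g a = 0 := by omega
  refine ⟨m, h2.1, fun m' hm' => ?_⟩
  exact Finset.sum_eq_zero_iff.mp h2.2 m' (Finset.mem_erase.mpr ⟨hm', Finset.mem_univ _⟩)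

lemma eq_dd (n : ℕ) (hn : 5 ≤ n) (i j : Fin (n - 1)) (d : Vars n →₀ ℕ)
    (hd : Finsupp.weight (wt n) d
      = Hc n - ∑ I ∈ Finset.univ.filter (fun I : Idx n => i ∉ I.1 ∧ j ∉ I.1), Ec n I) :
    d = dd n i j ∨ d = dd n j i := by
  classical
  -- coordinate at inl ()
  have h0 : ∑ m : Fin (n - 1), d (Sum.inl m) = 1 := by
    have := congrFun (congrArg (fun p : Pic n => (p : (Unit ⊕ Idx n) → ℤ)) hd) (Sum.inl ())
    rw [weight_coord, Fintype.sum_sum_type] at this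
    simp only [wt_inl_inl, wt_inr_inl, mul_one, mul_zero, Finset.sum_const_zero, add_zero] at this
    rw [Finsupp.sub_apply, sumEc_apply_inl] at this
    simp only [Hc, Finsupp.single_apply, if_pos rfl, sub_zero] at this
    exact_mod_cast this
  obtain ⟨m₀, hm1, hm0⟩ := sum_nat_eq_one _ h0
  -- coordinate at inr I
  have h2 : ∀ I : Idx n, (if m₀ ∈ I.1 then 0 else -1) + (d (Sum.inr I) : ℤ)
      = -(if i ∉ I.1 ∧ j ∉ I.1 then 1 else 0) := by
    intro I
    have := congrFun (congrArg (fun p : Pic n => (p : (Unit ⊕ Idx n) → ℤ)) hd) (Sum.inr I)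
    rw [weight_coord, Fintype.sum_sum_type] at this
    simp only [wt_inl_inr, wt_inr_inr] at this
    have e1 : ∑ m : Fin (n - 1), (d (Sum.inl m) : ℤ) * (if m ∈ I.1 then 0 else -1)
        = (if m₀ ∈ I.1 then 0 else -1) := by
      rw [Finset.sum_eq_single m₀]
      · rw [hm1]; push_cast; ring
      · intro m' _ hne; rw [hm0 m' hne]; push_cast; ring
      · intro h; exact absurd (Finset.mem_univ m₀) h
    have e2 : ∑ I' : Idx n, (d (Sum.inr I') : ℤ) * (if I' = I then 1 else 0)
        = (d (Sum.inr I) : ℤ) := by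
      rw [Finset.sum_congr rfl (fun I' _ => by rw [mul_ite, mul_one, mul_zero]),
        Finset.sum_ite_eq' Finset.univ I (fun I' => (d (Sum.inr I') : ℤ))]
      simp
    rw [e1, e2] at this
    rw [this, Finsupp.sub_apply, sumEc_apply_inr]
    simp only [Hc, Finsupp.single_apply, Finset.mem_filter, Finset.mem_univ, true_and]
    split_ifs <;> simp_all
  -- m₀ must be i or j
  have hm : m₀ = i ∨ m₀ = j := by
    by_contra hc
    push_neg at hc
    have hcard : (1 : ℕ) ≤ ({m₀} : Finset (Fin (n - 1))).card ∧
        ({m₀} : Finset (Fin (n - 1))).card ≤ n - 4 := by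
      simp only [Finset.card_singleton]
      omega
    set I₀ : Idx n := ⟨{m₀}, hcard⟩
    have := h2 I₀
    have hmem : m₀ ∈ I₀.1 := Finset.mem_singleton_self m₀
    have hi : i ∉ I₀.1 := by simp [I₀]; exact fun h => hc.1 h.symm
    have hj : j ∉ I₀.1 := by simp [I₀]; exact fun h => hc.2 h.symm
    rw [if_pos hmem, if_pos ⟨hi, hj⟩] at this
    omega
  -- conclude
  have key : ∀ (a b : Fin (n - 1)), d (Sum.inl a) = 1 → (∀ m', m' ≠ a → d (Sum.inl m') = 0) →
      (∀ I : Idx n, (if a ∈ I.1 then 0 else -1) + (d (Sum.inr I) : ℤ)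
        = -(if a ∉ I.1 ∧ b ∉ I.1 then 1 else 0)) → d = dd n a b := by
    intro a b ha1 ha0 hI2
    ext v
    cases v with
    | inl m =>
        rw [dd_apply_inl]
        by_cases hm : m = a
        · subst hm; simp [ha1]
        · simp [hm, ha0 m hm]
    | inr I =>
        rw [dd_apply_inr]
        have hI := hI2 I
        by_cases h1 : a ∈ I.1
        · rw [if_pos h1] at hI
          rw [if_neg (fun hc : a ∉ I.1 ∧ b ∉ I.1 => hc.1 h1)] at hI
          rw [if_neg (fun hc : b ∈ I.1 ∧ a ∉ I.1 => hc.2 h1)]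
          omega
        · by_cases h3 : b ∈ I.1
          · rw [if_neg h1, if_neg (fun hc : a ∉ I.1 ∧ b ∉ I.1 => hc.2 h3)] at hI
            rw [if_pos ⟨h3, h1⟩]
            omega
          · rw [if_neg h1, if_pos ⟨h1, h3⟩] at hI
            rw [if_neg (fun hc : b ∈ I.1 ∧ a ∉ I.1 => h3 hc.1)]
            omega
  rcases hm with hm | hm
  · rw [hm] at hm1 hm0 h2
    exact Or.inl (key i j hm1 hm0 h2)
  · rw [hm] at hm1 hm0 h2
    refine Or.inr (key j i hm1 hm0 (fun I => ?_))
    have := h2 I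
    rwa [show (if i ∉ I.1 ∧ j ∉ I.1 then (1:ℤ) else 0)
        = (if j ∉ I.1 ∧ i ∉ I.1 then (1:ℤ) else 0) from if_congr and_comm rfl rfl] at this

lemma zz_mul_prod (n : ℕ) (i j : Fin (n - 1)) :
    zz k n i * ∏ I ∈ Finset.univ.filter (fun I : Idx n => j ∈ I.1 ∧ i ∉ I.1), xx k n I
      = ∏ I ∈ Finset.univ.filter (fun I : Idx n => i ∈ I.1 ∨ j ∈ I.1), xx k n I := by
  classical
  rw [zz, ← Finset.prod_union (by
    rw [Finset.disjoint_left]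
    intro I hI hI'
    simp only [Finset.mem_filter] at hI hI'
    tauto)]
  refine Finset.prod_congr ?_ (fun _ _ => rfl)
  ext I
  simp only [Finset.mem_union, Finset.mem_filter, Finset.mem_univ, true_and]
  tauto

lemma tau_yy (n : ℕ) (i : Fin (n - 1)) :
    τₐ k n (yy k n i) = Polynomial.C (yy k n i) + Polynomial.X * Polynomial.C (zz k n i) := by
  rw [yy, τₐ, aeval_X, Sum.elim_inl]; rfl

lemma tau_prod (n : ℕ) (s : Finset (Idx n)) :
    τₐ k n (∏ I ∈ s, xx k n I) = Polynomial.C (∏ I ∈ s, xx k n I) := by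
  rw [map_prod, map_prod]
  refine Finset.prod_congr rfl fun I _ => ?_
  rw [xx, τₐ, aeval_X, Sum.elim_inr]; rfl

lemma tau_Mi (n : ℕ) (i j : Fin (n - 1)) :
    τₐ k n (yy k n i * ∏ I ∈ Finset.univ.filter (fun I : Idx n => j ∈ I.1 ∧ i ∉ I.1), xx k n I)
      = Polynomial.C (yy k n i *
          ∏ I ∈ Finset.univ.filter (fun I : Idx n => j ∈ I.1 ∧ i ∉ I.1), xx k n I)
        + Polynomial.X * Polynomial.C
            (∏ I ∈ Finset.univ.filter (fun I : Idx n => i ∈ I.1 ∨ j ∈ I.1), xx k n I) := by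
  rw [map_mul, tau_yy, tau_prod, add_mul, ← Polynomial.C_mul, mul_assoc,
    ← Polynomial.C_mul, zz_mul_prod]

lemma filter_or_comm (n : ℕ) (i j : Fin (n - 1)) :
    Finset.univ.filter (fun I : Idx n => j ∈ I.1 ∨ i ∈ I.1)
      = Finset.univ.filter (fun I : Idx n => i ∈ I.1 ∨ j ∈ I.1) := by
  ext I
  simp only [Finset.mem_filter, Finset.mem_univ, true_and]
  tauto

lemma tau_C (n : ℕ) (a : k) : τₐ k n (C a) = Polynomial.C (C a) := by
  rw [τₐ, aeval_C]
  rfl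

lemma tau_B (n : ℕ) (i j : Fin (n - 1)) :
    τₐ k n (B k n i j) = Polynomial.C (B k n i j) := by
  rw [B, map_sub, tau_Mi, tau_Mi, filter_or_comm, map_sub]
  ring

lemma B_eq (n : ℕ) (i j : Fin (n - 1)) :
    B k n i j = monomial (dd n i j) (1 : k) - monomial (dd n j i) (1 : k) := by
  rw [B, Mi_eq, Mi_eq]

lemma B_hom (n : ℕ) (i j : Fin (n - 1)) :
    IsWeightedHomogeneous (wt n) (B k n i j)
      (Hc n - ∑ I ∈ Finset.univ.filter (fun I : Idx n => i ∉ I.1 ∧ j ∉ I.1), Ec n I) := by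
  classical
  have hsym : Finset.univ.filter (fun I : Idx n => j ∉ I.1 ∧ i ∉ I.1)
      = Finset.univ.filter (fun I : Idx n => i ∉ I.1 ∧ j ∉ I.1) := by
    ext I
    simp only [Finset.mem_filter, Finset.mem_univ, true_and]
    tauto
  have h1 := isWeightedHomogeneous_monomial (wt n) (dd n i j) (1 : k) (weight_dd n i j)
  have h2 := isWeightedHomogeneous_monomial (wt n) (dd n j i) (1 : k)
    (by rw [weight_dd n j i, hsym])
  rw [B_eq]
  exact (weightedHomogeneousSubmodule k (wt n) _).sub_mem h1 h2

lemma dd_ne (n : ℕ) (i j : Fin (n - 1)) (hij : i ≠ j) : dd n i j ≠ dd n j i := by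
  intro h
  have h1 := congrArg (fun g : Vars n →₀ ℕ => g (Sum.inl i)) h
  simp only [dd_apply_inl, if_pos rfl, if_neg hij] at h1
  exact one_ne_zero h1

/-- for `i ≠ j`, the invariant elements of `R` that are `Λ`-homogeneous of
degree `H − Σ_{I∈𝓘, I∩{i,j}=∅} E_I` are exactly the scalar multiples of `B_{ij}`
(Proposition 3.5). -/
theorem stmt5 (n : ℕ) (hn : 5 ≤ n) (i j : Fin (n - 1)) (hij : i ≠ j) (f : R k n) :
    (τₐ k n f = Polynomial.C f ∧
      IsWeightedHomogeneous (wt n) f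
        (Hc n - ∑ I ∈ Finset.univ.filter (fun I : Idx n => i ∉ I.1 ∧ j ∉ I.1), Ec n I))
    ↔ ∃ c : k, f = C c * B k n i j := by
  classical
  constructor
  · rintro ⟨hinv, hhom⟩
    set a := coeff (dd n i j) f with ha
    set b := coeff (dd n j i) f with hb
    have hne := dd_ne n i j hij
    -- f is supported on the two exponent vectors
    have hf : f = monomial (dd n i j) a + monomial (dd n j i) b := by
      ext d
      rw [coeff_add, coeff_monomial, coeff_monomial]
      by_cases h1 : dd n i j = d
      · rw [if_pos h1, if_neg (fun h2 => hne (h1.trans h2.symm)), ← h1, add_zero]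
      · by_cases h2 : dd n j i = d
        · rw [if_neg h1, if_pos h2, ← h2, zero_add]
        · rw [if_neg h1, if_neg h2, add_zero]
          by_contra hc
          rcases eq_dd n hn i j d (hhom hc) with h | h
          · exact h1 h.symm
          · exact h2 h.symm
    -- invariance forces b = -a
    have hz1 : Polynomial.C (zz k n i) * Polynomial.C
          (∏ I ∈ Finset.univ.filter (fun I : Idx n => j ∈ I.1 ∧ i ∉ I.1), xx k n I)
        = Polynomial.C (∏ I ∈ Finset.univ.filter (fun I : Idx n => i ∈ I.1 ∨ j ∈ I.1),
            (xx k n I : R k n)) := by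
      rw [← Polynomial.C_mul, zz_mul_prod]
    have hz2 : Polynomial.C (zz k n j) * Polynomial.C
          (∏ I ∈ Finset.univ.filter (fun I : Idx n => i ∈ I.1 ∧ j ∉ I.1), xx k n I)
        = Polynomial.C (∏ I ∈ Finset.univ.filter (fun I : Idx n => i ∈ I.1 ∨ j ∈ I.1),
            (xx k n I : R k n)) := by
      rw [← Polynomial.C_mul, zz_mul_prod k n j i, filter_or_comm]
    have htau : τₐ k n f = Polynomial.C f + Polynomial.X * Polynomial.C ((C a + C b) *
        ∏ I ∈ Finset.univ.filter (fun I : Idx n => i ∈ I.1 ∨ j ∈ I.1), xx k n I) := by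
      conv_lhs => rw [hf, ← mul_one a, ← C_mul_monomial, ← mul_one b, ← C_mul_monomial,
        ← Mi_eq, ← Mi_eq]
      conv_rhs => rw [hf, ← mul_one a, ← C_mul_monomial, ← mul_one b, ← C_mul_monomial,
        ← Mi_eq, ← Mi_eq]
      simp only [map_add, map_mul, tau_C, tau_yy, tau_prod, Polynomial.C_add, Polynomial.C_mul,
        C_1, Polynomial.C_1]
      linear_combination Polynomial.C (C a : R k n) * Polynomial.X * hz1
        + Polynomial.C (C b : R k n) * Polynomial.X * hz2
    rw [hinv, left_eq_add] at htau
    have hg : (C a + C b) *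
        (∏ I ∈ Finset.univ.filter (fun I : Idx n => i ∈ I.1 ∨ j ∈ I.1), xx k n I : R k n)
          = 0 := by
      have h := congrArg (fun p : Polynomial (R k n) => p.coeff (0 + 1)) htau
      simpa only [Polynomial.coeff_X_mul, Polynomial.coeff_C_zero, Polynomial.coeff_zero] using h
    have hW : (∏ I ∈ Finset.univ.filter (fun I : Idx n => i ∈ I.1 ∨ j ∈ I.1), xx k n I : R k n)
        ≠ 0 :=
      Finset.prod_ne_zero_iff.mpr fun I _ => by rw [xx]; exact X_ne_zero _
    have hab : a + b = 0 := by
      rcases mul_eq_zero.mp hg with h | h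
      · rw [← C_add] at h
        exact_mod_cast (map_eq_zero (C : k →+* R k n)).mp h
      · exact absurd h hW
    have hb' : b = -a := by linear_combination hab
    refine ⟨a, ?_⟩
    rw [hf, hb', map_neg, B_eq, mul_sub, C_mul_monomial, C_mul_monomial, mul_one]
    ring
  · rintro ⟨c, rfl⟩
    refine ⟨?_, ?_⟩
    · rw [map_mul, tau_C, tau_B, ← Polynomial.C_mul]
    · intro d hcoeff
      rw [coeff_C_mul] at hcoeff
      exact B_hom k n i j (right_ne_zero_of_mul hcoeff)

end
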